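/- arXiv:1708.09294 — 2 statements merged into one kernel-verified Lean document; each statement's English description precedes it below -/
import Mathlib

section
/- For the maximal splitting of 𝒯̂, there exists a constant c with c ∼ 1 (i.e. c and 1/c bounded by constants depending only on k) such that α_j = c·α̂_j for all j ∉ B, where B = {−k,…,−1} ∪ {n−k,…,n−1} is the set of boundary indices, α_j are the coefficients of the non-periodic orthogonal spline function g = Σ_j α_j N_j* on 𝒯 and α̂_j those of the periodic orthogonal spline function ĝ = Σ_j α̂_j N̂_j* on 𝒯̂. -/
/-!
Away from the two ends of `[0,1]` the knots `τ_ℓ` and `σ_ℓ` coincide, so the product formulas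
for `α_j` and `α̂_j` differ only in the factors indexed by the few `ℓ` whose
B-spline support `[σ_ℓ, σ_{ℓ+k}]` crosses the splitting point `0 ≡ 1`; for `0 ≤ j < n - k`
every such factor occurs in both formulas, so `α_j / α̂_j` is one and the same constant `c`.
Each crossing factor changes by a ratio of the shape `(x / y) / ((x + t) / (y + t))`, where
`x, y ≥ σ_0` are distances to the splitting point and `t` is the length of the part of the
support beyond it. For the maximal splitting every gap between consecutive knots is at most
`2 σ_0`, hence `t ≤ 2 k σ_0`, so each ratio lies in `[1/(2k+1), 2k+1]`.
-/

open MeasureTheory Set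
open scoped ENNReal NNReal

noncomputable section

/-- The measure on the torus `𝕋`, identified with `[0,1)`. -/
def μ01 : Measure ℝ := volume.restrict (Set.Ico 0 1)

/-- `f` is a periodic (1-periodic) spline of order `k` with knot multiplicity function `m`
(the knots are the points of `[0,1)` where `m` is nonzero, counted with multiplicity `m`).
We use the right-continuous representatives. -/
def IsPeriodicSpline (k : ℕ) (m : ℝ → ℕ) (f : ℝ → ℝ) : Prop :=
  (∀ x, f (x + 1) = f x) ∧
  (∀ a b : ℝ, (∀ x ∈ Set.Ioo a b, m (Int.fract x) = 0) →
    ∃ P : Polynomial ℝ, P.degree < (k : WithBot ℕ) ∧ ∀ x ∈ Set.Ioo a b, f x = P.eval x) ∧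
  (∀ x : ℝ, m (Int.fract x) < k → ContDiffAt ℝ (k - 1 - m (Int.fract x)) f x) ∧
  (∀ x : ℝ, ContinuousWithinAt f (Set.Ici x) x)

/-- A periodic knot sequence `(σ_j)_{j∈ℤ}` of period `n` (i.e. `σ_{j+n} = σ_j + 1`),
with `0 ≤ σ_0 ≤ ⋯ ≤ σ_{n-1} < 1` and knot multiplicities at most `k`. -/
structure PKnots (k n : ℕ) where
  σ : ℤ → ℝ
  mono : Monotone σ
  per : ∀ j, σ (j + (n : ℤ)) = σ j + 1
  sep : ∀ j, σ j < σ (j + (k : ℤ))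
  lo : 0 ≤ σ 0
  hi : σ ((n : ℤ) - 1) < 1

variable {k n : ℕ}

/-- multiplicity of a point `x` in the knot sequence. -/
def PKnots.mult (K : PKnots k n) (x : ℝ) : ℕ :=
  Set.ncard {j : ℤ | 0 ≤ j ∧ j < (n : ℤ) ∧ K.σ j = x}

def PKnots.IsSpline (K : PKnots k n) (f : ℝ → ℝ) : Prop :=
  IsPeriodicSpline k K.mult f

/-- length of the support of the `j`-th B-spline. -/
def PKnots.ν (K : PKnots k n) (j : ℤ) : ℝ := K.σ (j + (k : ℤ)) - K.σ j

/-- `(N_i)_{i∈ℤ}` is the family of `L^∞`-normalized periodic B-splines of order `k`: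
each `N_i` is a spline, the family is `n`-periodic in the index, `N_i` is nonnegative and
nonzero, `N_i` is supported (as a function on the torus) in `[σ_i, σ_{i+k}]`, and the
family forms a partition of unity. -/
def IsBSplineFamily (K : PKnots k n) (N : ℤ → ℝ → ℝ) : Prop :=
  (∀ i, K.IsSpline (N i)) ∧
  (∀ i, N (i + (n : ℤ)) = N i) ∧
  (∀ i x, 0 ≤ N i x) ∧
  (∀ i, ∃ x, N i x ≠ 0) ∧
  (∀ i x, N i x ≠ 0 → ∃ r : ℤ, x + (r : ℝ) ∈ Set.Icc (K.σ i) (K.σ (i + (k : ℤ)))) ∧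
  (∀ x, ∑ i ∈ Finset.Ico (0 : ℤ) (n : ℤ), N i x = 1)

/-- `(Nd_i)` is the dual basis (inside the periodic spline space) to the B-spline family
`(N_i)`, biorthogonal in `L²(𝕋)`. -/
def IsDualFamily (K : PKnots k n) (N Nd : ℤ → ℝ → ℝ) : Prop :=
  (∀ i, K.IsSpline (Nd i)) ∧
  (∀ i, Nd (i + (n : ℤ)) = Nd i) ∧
  (∀ i j : ℤ, i ∈ Finset.Ico (0 : ℤ) (n : ℤ) → j ∈ Finset.Ico (0 : ℤ) (n : ℤ) →
    ∫ x in Set.Ico (0 : ℝ) 1, Nd i x * N j x = if i = j then 1 else 0)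

/-- the coefficients `α̂_j` of the periodic orthogonal spline function corresponding to the
removal of the knot `σ_{i0}`. -/
def alphaHat (K : PKnots k n) (i0 j : ℤ) : ℝ :=
  (-1 : ℝ) ^ (j - i0 + (k : ℤ)) *
    (∏ ℓ ∈ Finset.Ico (i0 - (k : ℤ) + 1) j, (K.σ i0 - K.σ ℓ) / (K.σ (ℓ + (k : ℤ)) - K.σ ℓ)) *
    (∏ ℓ ∈ Finset.Ico (j + 1) i0, (K.σ (ℓ + (k : ℤ)) - K.σ i0) / (K.σ (ℓ + (k : ℤ)) - K.σ ℓ))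

/-- the periodic orthogonal spline function `ĝ = Σ_{j=i0-k}^{i0} α̂_j N̂_j^*`. -/
def gHat (K : PKnots k n) (Nd : ℤ → ℝ → ℝ) (i0 : ℤ) : ℝ → ℝ :=
  fun x => ∑ j ∈ Finset.Icc (i0 - (k : ℤ)) i0, alphaHat K i0 j * Nd j x

/-- `[A,B]` is a characteristic interval corresponding to the knot `σ_{i0}`. -/
def IsCharInterval (K : PKnots k n) (i0 : ℤ) (A B : ℝ) : Prop :=
  ∃ j0 ∈ Finset.Icc (i0 - (k : ℤ)) i0,
    (∀ ℓ ∈ Finset.Icc (i0 - (k : ℤ)) i0, K.ν j0 ≤ 2 * K.ν ℓ) ∧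
    (∀ j ∈ Finset.Icc (i0 - (k : ℤ)) i0,
      (∀ ℓ ∈ Finset.Icc (i0 - (k : ℤ)) i0, K.ν j ≤ 2 * K.ν ℓ) →
      |alphaHat K i0 j| ≤ |alphaHat K i0 j0|) ∧
    ∃ l0 : ℕ, l0 < k ∧
      (∀ l : ℕ, l < k →
        K.σ (j0 + (l : ℤ) + 1) - K.σ (j0 + (l : ℤ)) ≤ K.σ (j0 + (l0 : ℤ) + 1) - K.σ (j0 + (l0 : ℤ))) ∧
      A = K.σ (j0 + (l0 : ℤ)) ∧ B = K.σ (j0 + (l0 : ℤ) + 1)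

/-- periodic distance of indices `i, j ∈ {0, …, n-1}`. -/
def pdist (n : ℕ) (i j : ℤ) : ℕ := min (i - j).natAbs (n - (i - j).natAbs)

/-- The arc `[a,b]` (as an interval on the torus) contains the arcs `[A,B]` and `[A',B']`. -/
def ArcContains (a b A B A' B' : ℝ) : Prop :=
  (∃ r : ℤ, Set.Icc (A + (r : ℝ)) (B + (r : ℝ)) ⊆ Set.Icc a b) ∧
  (∃ r : ℤ, Set.Icc (A' + (r : ℝ)) (B' + (r : ℝ)) ⊆ Set.Icc a b)

/-- The arc `[a,b] ⊂ 𝕋` is minimal under inclusion among intervals of the torus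
containing the arcs `[A,B]` and `[A',B']`. -/
def IsMinArc (a b A B A' B' : ℝ) : Prop :=
  a ≤ b ∧ b - a ≤ 1 ∧ ArcContains a b A B A' B' ∧
  ∀ a' b' : ℝ, a' ≤ b' → (∃ r : ℤ, a ≤ a' + (r : ℝ) ∧ b' + (r : ℝ) ≤ b) →
    ArcContains a' b' A B A' B' → b - a ≤ b' - a'

/-- number of knots of the knot sequence (counted with multiplicity) lying on the
arc `[a,b]` of the torus. -/
def knotCount (K : PKnots k n) (a b : ℝ) : ℕ :=
  Set.ncard {j : ℤ | 0 ≤ j ∧ j < (n : ℤ) ∧ ∃ r : ℤ, K.σ j + (r : ℝ) ∈ Set.Icc a b}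

/-- the subset of `[0,1)` corresponding to the arc `[a,b]` of the torus. -/
def arcSet (a b : ℝ) : Set ℝ := {x | x ∈ Set.Ico (0 : ℝ) 1 ∧ ∃ r : ℤ, x + (r : ℝ) ∈ Set.Icc a b}

/-- the subset of `[0,1)` corresponding to the open arc `(a,b)` of the torus. -/
def arcSetO (a b : ℝ) : Set ℝ := {x | x ∈ Set.Ico (0 : ℝ) 1 ∧ ∃ r : ℤ, x + (r : ℝ) ∈ Set.Ioo a b}

/-- the non-periodic partition of `[0,1]` obtained from the splitting of a periodic
partition at `0`: boundary knots get multiplicity `k`. -/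
def tauOf (K : PKnots k n) : ℤ → ℝ :=
  fun j => if j < 0 then 0 else if j < (n : ℤ) then K.σ j else 1

/-- the coefficients `α_j` of the non-periodic orthogonal spline function corresponding
to the knots `tauOf K` and the removal of `τ_{i0}`. -/
def alphaNP (K : PKnots k n) (i0 j : ℤ) : ℝ :=
  (-1 : ℝ) ^ (j - i0 + (k : ℤ)) *
    (∏ ℓ ∈ Finset.Ico (i0 - (k : ℤ) + 1) j,
      (tauOf K i0 - tauOf K ℓ) / (tauOf K (ℓ + (k : ℤ)) - tauOf K ℓ)) *
    (∏ ℓ ∈ Finset.Ico (j + 1) i0,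
      (tauOf K (ℓ + (k : ℤ)) - tauOf K i0) / (tauOf K (ℓ + (k : ℤ)) - tauOf K ℓ))

/-- the periodic partition is normalized so that the splitting at `0` is the maximal
splitting: `σ_0 = 1 - σ_{n-1} = (1/2) max_j (σ_j - σ_{j-1})`. -/
def IsMaxSplit (K : PKnots k n) : Prop :=
  (∀ j ∈ Finset.Ico (0 : ℤ) (n : ℤ), K.σ j - K.σ (j - 1) ≤ 2 * K.σ 0) ∧
  (∃ j ∈ Finset.Ico (0 : ℤ) (n : ℤ), K.σ j - K.σ (j - 1) = 2 * K.σ 0) ∧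
  1 - K.σ ((n : ℤ) - 1) = K.σ 0

/-- `[A,B]` is a characteristic interval for the non-periodic partition `tauOf K`
corresponding to the knot `τ_{i0}`. -/
def IsCharIntervalNP (K : PKnots k n) (i0 : ℤ) (A B : ℝ) : Prop :=
  ∃ j0 ∈ Finset.Icc (i0 - (k : ℤ)) i0,
    (∀ ℓ ∈ Finset.Icc (i0 - (k : ℤ)) i0,
      tauOf K (j0 + (k : ℤ)) - tauOf K j0 ≤ 2 * (tauOf K (ℓ + (k : ℤ)) - tauOf K ℓ)) ∧
    (∀ j ∈ Finset.Icc (i0 - (k : ℤ)) i0,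
      (∀ ℓ ∈ Finset.Icc (i0 - (k : ℤ)) i0,
        tauOf K (j + (k : ℤ)) - tauOf K j ≤ 2 * (tauOf K (ℓ + (k : ℤ)) - tauOf K ℓ)) →
      |alphaNP K i0 j| ≤ |alphaNP K i0 j0|) ∧
    ∃ l0 : ℕ, l0 < k ∧
      (∀ l : ℕ, l < k →
        tauOf K (j0 + (l : ℤ) + 1) - tauOf K (j0 + (l : ℤ)) ≤
          tauOf K (j0 + (l0 : ℤ) + 1) - tauOf K (j0 + (l0 : ℤ))) ∧
      A = tauOf K (j0 + (l0 : ℤ)) ∧ B = tauOf K (j0 + (l0 : ℤ) + 1)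

/-- `s` is an admissible sequence of knots in the torus `𝕋 = [0,1)`: dense and each point
occurs at most `k` times. -/
def IsAdmissible (k : ℕ) (s : ℕ → ℝ) : Prop :=
  (∀ n, s n ∈ Set.Ico (0 : ℝ) 1) ∧
  (∀ x ∈ Set.Icc (0 : ℝ) 1, ∀ ε > 0, ∃ n, |s n - x| < ε) ∧
  (∀ x : ℝ, ∀ F : Finset ℕ, (∀ m ∈ F, s m = x) → F.card ≤ k)

/-- `K` is the increasing enumeration of the first `n` points `s_0, …, s_{n-1}`. -/
def Enumerates (s : ℕ → ℝ) (n : ℕ) (K : PKnots k n) : Prop :=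
  ∀ x : ℝ, {j : ℤ | 0 ≤ j ∧ j < (n : ℤ) ∧ K.σ j = x}.ncard = {m : ℕ | m < n ∧ s m = x}.ncard

/-- `[A n, B n]` is a characteristic interval `Ĵ_n` corresponding to the new knot
`s_{n-1}` in the partition formed by `s_0, …, s_{n-1}` (for every `n ≥ 2k`). -/
def HasCharIntervals (k : ℕ) (s : ℕ → ℝ) (A B : ℕ → ℝ) : Prop :=
  ∀ n : ℕ, 2 * k ≤ n → ∃ K : PKnots k n, Enumerates s n K ∧
    ∃ i0 : ℤ, 0 ≤ i0 ∧ i0 < (n : ℤ) ∧ K.σ i0 = s (n - 1) ∧ IsCharInterval K i0 (A n) (B n)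

/-- the multiplicity function of the knot set `{s_0, …, s_{n-1}}`. -/
def multUpTo (s : ℕ → ℝ) (n : ℕ) (x : ℝ) : ℕ := {m : ℕ | m < n ∧ s m = x}.ncard

/-- `(f_n)_{n ≥ 1}` is the periodic orthonormal spline system of order `k` corresponding to
the point sequence `(s_j)_{j ≥ 0}`:  `(f_n)_{n=1}^k` is an orthonormal basis of the spline
space on the knots `s_0, …, s_{k-1}`, and for `n ≥ k+1`, `f_n` is a unit vector in the spline
space on `s_0, …, s_{n-1}` orthogonal to the spline space on `s_0, …, s_{n-2}`. -/
def IsONSplineSystem (k : ℕ) (s : ℕ → ℝ) (f : ℕ → ℝ → ℝ) : Prop :=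
  (∀ m n : ℕ, 1 ≤ m → 1 ≤ n →
    ∫ x in Set.Ico (0 : ℝ) 1, f m x * f n x = if m = n then 1 else 0) ∧
  (∀ n, 1 ≤ n → n ≤ k → IsPeriodicSpline k (multUpTo s k) (f n)) ∧
  (∀ g : ℝ → ℝ, IsPeriodicSpline k (multUpTo s k) g →
    ∃ c : ℕ → ℝ, ∀ x, g x = ∑ i ∈ Finset.Icc 1 k, c i * f i x) ∧
  (∀ n, k + 1 ≤ n → IsPeriodicSpline k (multUpTo s n) (f n) ∧
    (∀ g : ℝ → ℝ, IsPeriodicSpline k (multUpTo s (n - 1)) g →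
      ∫ x in Set.Ico (0 : ℝ) 1, f n x * g x = 0))

end

theorem div_div_div_add_mem_Icc {α : Type*} [Field α] [LinearOrder α] [IsStrictOrderedRing α]
    {M x y t : α} (hx : 0 < x) (hy : 0 < y) (ht : 0 ≤ t) (htx : t ≤ M * x) (hty : t ≤ M * y) :
    x / y / ((x + t) / (y + t)) ∈ Icc (M + 1)⁻¹ (M + 1) := by
  have hxt : 0 < x + t := by linarith
  have hM : 0 < M + 1 := by nlinarith
  have hratio : x / y / ((x + t) / (y + t)) = x * (y + t) / (y * (x + t)) := by
    field_simp
  rw [hratio, mem_Icc, inv_le_iff_one_le_mul₀ hM, div_mul_eq_mul_div, one_le_div₀ (by positivity),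
    div_le_iff₀ (by positivity)]
  constructor <;> nlinarith [mul_le_mul_of_nonneg_left htx hy.le,
    mul_le_mul_of_nonneg_left hty hx.le, mul_nonneg hx.le ht, mul_nonneg hy.le ht]

theorem Finset.prod_mem_Icc_inv_pow {ι α : Type*} [Field α] [LinearOrder α]
    [IsStrictOrderedRing α] {s : Finset ι} {f : ι → α} {M : α} {k : ℕ} (hM : 1 ≤ M)
    (hf : ∀ i ∈ s, f i ∈ Set.Icc M⁻¹ M) (hs : s.card ≤ k) :
    ∏ i ∈ s, f i ∈ Set.Icc (M ^ k)⁻¹ (M ^ k) := by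
  have hM₀ : 0 < M := zero_lt_one.trans_le hM
  constructor
  · calc (M ^ k)⁻¹ = M⁻¹ ^ k := (inv_pow M k).symm
      _ ≤ M⁻¹ ^ s.card := pow_le_pow_of_le_one (by positivity) (inv_le_one_of_one_le₀ hM) hs
      _ = ∏ _i ∈ s, M⁻¹ := (Finset.prod_const _).symm
      _ ≤ ∏ i ∈ s, f i := Finset.prod_le_prod (fun _ _ => by positivity) fun i hi => (hf i hi).1
  · calc ∏ i ∈ s, f i ≤ ∏ _i ∈ s, M :=
          Finset.prod_le_prod (fun i hi => (inv_nonneg.2 hM₀.le).trans (hf i hi).1)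
            fun i hi => (hf i hi).2
      _ = M ^ s.card := Finset.prod_const _
      _ ≤ M ^ k := pow_le_pow_right₀ hM hs

theorem mul_mem_Icc_inv_mul {α : Type*} [Field α] [LinearOrder α] [IsStrictOrderedRing α]
    {C D a b : α} (hC : 0 < C) (hD : 0 < D) (ha : a ∈ Icc C⁻¹ C) (hb : b ∈ Icc D⁻¹ D) :
    a * b ∈ Icc (C * D)⁻¹ (C * D) := by
  have ha₀ : 0 ≤ a := (inv_nonneg.2 hC.le).trans ha.1
  have hb₀ : 0 ≤ b := (inv_nonneg.2 hD.le).trans hb.1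
  exact ⟨mul_inv C D ▸ mul_le_mul ha.1 hb.1 (by positivity) ha₀,
    mul_le_mul ha.2 hb.2 hb₀ hC.le⟩

theorem Finset.prod_eq_prod_div_mul_prod {ι α : Type*} [DecidableEq ι] [Field α]
    {s t : Finset ι} {f g : ι → α} (hst : s ⊆ t) (hg : ∀ i ∈ s, g i ≠ 0)
    (hfg : ∀ i ∈ t \ s, f i = g i) :
    ∏ i ∈ t, f i = (∏ i ∈ s, f i / g i) * ∏ i ∈ t, g i := by
  have hgs : ∏ i ∈ s, g i ≠ 0 := Finset.prod_ne_zero_iff.2 hg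
  rw [← Finset.prod_sdiff hst, ← Finset.prod_sdiff hst (f := g), Finset.prod_congr rfl hfg,
    Finset.prod_div_distrib]
  field_simp

theorem sub_le_mul_of_forall_sub_pred_le {α : Type*} [CommRing α] [LinearOrder α]
    [IsOrderedRing α] {f : ℤ → α} {g : α} (h : ∀ j, f j - f (j - 1) ≤ g) {a b : ℤ} (hab : a ≤ b) :
    f b - f a ≤ (b - a) * g := by
  induction b, hab using Int.leInduction with
  | base => simp
  | succ b _ ih =>
    have hstep := h (b + 1)
    rw [add_sub_cancel_right] at hstep
    calc f (b + 1) - f a = (f b - f a) + (f (b + 1) - f b) := by ring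
      _ ≤ (b - a) * g + g := add_le_add ih hstep
      _ = ((b + 1 : ℤ) - a) * g := by push_cast; ring

noncomputable def lowerFactor (s : ℤ → ℝ) (k : ℕ) (i0 ℓ : ℤ) : ℝ :=
  (s i0 - s ℓ) / (s (ℓ + k) - s ℓ)

noncomputable def upperFactor (s : ℤ → ℝ) (k : ℕ) (i0 ℓ : ℤ) : ℝ :=
  (s (ℓ + k) - s i0) / (s (ℓ + k) - s ℓ)

noncomputable def dualCoeff (s : ℤ → ℝ) (k : ℕ) (i0 j : ℤ) : ℝ :=
  (-1 : ℝ) ^ (j - i0 + k) * (∏ ℓ ∈ Finset.Ico (i0 - k + 1) j, lowerFactor s k i0 ℓ) *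
    ∏ ℓ ∈ Finset.Ico (j + 1) i0, upperFactor s k i0 ℓ

theorem dualCoeff_eq_mul_dualCoeff {s s' : ℤ → ℝ} {k : ℕ} {a b i0 j : ℤ}
    (hss' : ∀ ℓ, a ≤ ℓ → ℓ < b → s' ℓ = s ℓ) (hai0 : a ≤ i0) (hi0b : i0 < b)
    (haj : a ≤ j) (hjb : j + k < b)
    (hlower : ∀ ℓ ∈ Finset.Ico (i0 - k + 1) a, lowerFactor s k i0 ℓ ≠ 0)
    (hupper : ∀ ℓ ∈ Finset.Ico (b - k) i0, upperFactor s k i0 ℓ ≠ 0) :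
    dualCoeff s' k i0 j =
      (∏ ℓ ∈ Finset.Ico (i0 - k + 1) a, lowerFactor s' k i0 ℓ / lowerFactor s k i0 ℓ) *
        (∏ ℓ ∈ Finset.Ico (b - k) i0, upperFactor s' k i0 ℓ / upperFactor s k i0 ℓ) *
        dualCoeff s k i0 j := by
  have hlowerProd := Finset.prod_eq_prod_div_mul_prod (f := lowerFactor s' k i0)
    (Finset.Ico_subset_Ico_right haj) hlower fun ℓ hℓ => by
      simp only [Finset.mem_sdiff, Finset.mem_Ico] at hℓ
      simp only [lowerFactor]
      rw [hss' i0 hai0 hi0b, hss' ℓ (by omega) (by omega), hss' (ℓ + k) (by omega) (by omega)]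
  have hupperProd := Finset.prod_eq_prod_div_mul_prod (f := upperFactor s' k i0)
    (Finset.Ico_subset_Ico_left (by omega : j + 1 ≤ b - k)) hupper fun ℓ hℓ => by
      simp only [Finset.mem_sdiff, Finset.mem_Ico] at hℓ
      simp only [upperFactor]
      rw [hss' i0 hai0 hi0b, hss' ℓ (by omega) (by omega), hss' (ℓ + k) (by omega) (by omega)]
  simp only [dualCoeff]
  rw [hlowerProd, hupperProd]
  ring

section Knots

variable {k n : ℕ}

theorem alphaHat_eq_dualCoeff (K : PKnots k n) (i0 j : ℤ) :
    alphaHat K i0 j = dualCoeff K.σ k i0 j := rfl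

theorem alphaNP_eq_dualCoeff (K : PKnots k n) (i0 j : ℤ) :
    alphaNP K i0 j = dualCoeff (tauOf K) k i0 j := rfl

theorem tauOf_of_neg (K : PKnots k n) {j : ℤ} (hj : j < 0) : tauOf K j = 0 := if_pos hj

theorem tauOf_of_mem (K : PKnots k n) {j : ℤ} (hj : 0 ≤ j) (hjn : j < n) :
    tauOf K j = K.σ j := by
  simp only [tauOf, if_neg (not_lt.2 hj), if_pos hjn]

theorem tauOf_of_le (K : PKnots k n) {j : ℤ} (hj : n ≤ j) : tauOf K j = 1 := by
  simp only [tauOf, if_neg (by omega : ¬j < 0), if_neg (not_lt.2 hj)]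

theorem PKnots.periodic_gap (K : PKnots k n) :
    Function.Periodic (fun j => K.σ j - K.σ (j - 1)) (n : ℤ) := by
  intro j
  simp only
  rw [K.per, show j + n - 1 = j - 1 + n by ring, K.per]
  ring

theorem PKnots.lowerFactor_pos (K : PKnots k n) {i0 ℓ : ℤ} (h : K.σ ℓ < K.σ i0) :
    0 < lowerFactor K.σ k i0 ℓ :=
  div_pos (sub_pos.2 h) (sub_pos.2 (K.sep ℓ))

theorem PKnots.upperFactor_pos (K : PKnots k n) {i0 ℓ : ℤ} (h : K.σ i0 < K.σ (ℓ + k)) :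
    0 < upperFactor K.σ k i0 ℓ :=
  div_pos (sub_pos.2 h) (sub_pos.2 (K.sep ℓ))

namespace IsMaxSplit

variable {K : PKnots k n}

theorem σ_zero_pos (hK : IsMaxSplit K) : 0 < K.σ 0 := by
  linarith [hK.2.2, K.hi]

theorem σ_neg_one (hK : IsMaxSplit K) : K.σ (-1) = -K.σ 0 := by
  have hper := K.per (-1)
  rw [neg_add_eq_sub] at hper
  linarith [hK.2.2]

theorem gap_le (hK : IsMaxSplit K) (hn : 0 < n) (j : ℤ) : K.σ j - K.σ (j - 1) ≤ 2 * K.σ 0 := by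
  obtain ⟨m, hm, hjm⟩ := K.periodic_gap.exists_mem_Ico₀ (by exact_mod_cast hn) j
  rw [hjm]
  exact hK.1 m (Finset.mem_Ico.2 hm)

theorem σ_sub_σ_le (hK : IsMaxSplit K) (hn : 0 < n) {a b : ℤ} (hab : a ≤ b) :
    K.σ b - K.σ a ≤ 2 * (b - a) * K.σ 0 := by
  have := sub_le_mul_of_forall_sub_pred_le (hK.gap_le hn) hab
  linarith

theorem σ_pos (hK : IsMaxSplit K) {j : ℤ} (hj : 0 ≤ j) : 0 < K.σ j :=
  hK.σ_zero_pos.trans_le (K.mono hj)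

theorem σ_neg (hK : IsMaxSplit K) {j : ℤ} (hj : j < 0) : K.σ j < 0 := by
  have := K.mono (by omega : j ≤ -1)
  linarith [hK.σ_neg_one, hK.σ_zero_pos]

theorem σ_le_one_sub (hK : IsMaxSplit K) {j : ℤ} (hj : j < n) : K.σ j ≤ 1 - K.σ 0 := by
  have := K.mono (by omega : j ≤ n - 1)
  linarith [hK.2.2]

theorem one_lt_σ (hK : IsMaxSplit K) {j : ℤ} (hj : n ≤ j) : 1 < K.σ j := by
  have hper := K.per (j - n)
  rw [sub_add_cancel] at hper
  linarith [hK.σ_pos (by omega : 0 ≤ j - n)]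

theorem neg_σ_le (hK : IsMaxSplit K) (hn : 0 < n) {ℓ : ℤ} (hℓk : -k ≤ ℓ) (hℓ : ℓ ≤ 0) :
    -K.σ ℓ ≤ 2 * k * K.σ 0 := by
  have := hK.σ_sub_σ_le hn hℓ
  have hkℓ : -(ℓ : ℝ) ≤ k := by exact_mod_cast (by omega : -ℓ ≤ (k : ℤ))
  push_cast at this
  nlinarith [hK.σ_zero_pos]

theorem σ_le (hK : IsMaxSplit K) (hn : 0 < n) {m : ℤ} (hm : -1 ≤ m) (hmk : m < k) :
    K.σ m ≤ 2 * k * K.σ 0 := by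
  have := hK.σ_sub_σ_le hn hm
  have hmk' : (m : ℝ) + 1 ≤ k := by exact_mod_cast (by omega : m + 1 ≤ (k : ℤ))
  push_cast at this
  nlinarith [hK.σ_zero_pos, hK.σ_neg_one]

theorem lowerFactor_div_mem_Icc (hK : IsMaxSplit K) (hkn : k ≤ n) {i0 ℓ : ℤ} (hi0 : 0 ≤ i0)
    (hi0n : i0 < n) (hℓ : ℓ ∈ Finset.Ico (i0 - k + 1) 0) :
    lowerFactor (tauOf K) k i0 ℓ / lowerFactor K.σ k i0 ℓ ∈
      Icc (2 * (k : ℝ) + 1)⁻¹ (2 * k + 1) := by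
  rw [Finset.mem_Ico] at hℓ
  have hn : 0 < n := by omega
  have ht := hK.neg_σ_le hn (by omega : -(k : ℤ) ≤ ℓ) hℓ.2.le
  simp only [lowerFactor]
  rw [tauOf_of_mem K hi0 hi0n, tauOf_of_neg K hℓ.2,
    tauOf_of_mem K (j := ℓ + k) (by omega) (by omega), sub_zero, sub_zero, sub_eq_add_neg,
    sub_eq_add_neg (K.σ (ℓ + k))]
  exact div_div_div_add_mem_Icc (hK.σ_pos hi0) (hK.σ_pos (by omega))
    (neg_nonneg.2 (hK.σ_neg hℓ.2).le) (ht.trans (by nlinarith [K.mono hi0, hK.σ_zero_pos]))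
    (ht.trans (by nlinarith [K.mono (by omega : (0 : ℤ) ≤ ℓ + k), hK.σ_zero_pos]))

theorem upperFactor_div_mem_Icc (hK : IsMaxSplit K) (hkn : k ≤ n) {i0 ℓ : ℤ}
    (hi0n : i0 < n) (hℓ : ℓ ∈ Finset.Ico (n - k : ℤ) i0) :
    upperFactor (tauOf K) k i0 ℓ / upperFactor K.σ k i0 ℓ ∈
      Icc (2 * (k : ℝ) + 1)⁻¹ (2 * k + 1) := by
  rw [Finset.mem_Ico] at hℓ
  have hn : 0 < n := by omega
  have hshift : ∀ x : ℝ, K.σ (ℓ + k) - x = (1 - x) + K.σ (ℓ + k - n) := fun x => by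
    rw [← sub_add_cancel (ℓ + k) (n : ℤ), K.per, add_sub_cancel_right]
    ring
  have ht := hK.σ_le hn (by omega : -1 ≤ ℓ + k - n) (by omega)
  simp only [upperFactor]
  rw [tauOf_of_mem K (by omega) hi0n, tauOf_of_mem K (j := ℓ) (by omega) (by omega),
    tauOf_of_le K (j := ℓ + k) (by omega), hshift, hshift]
  exact div_div_div_add_mem_Icc (by linarith [hK.σ_le_one_sub hi0n, hK.σ_zero_pos])
    (by linarith [hK.σ_le_one_sub (by omega : ℓ < n), hK.σ_zero_pos])
    (hK.σ_pos (by omega)).le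
    (ht.trans (by nlinarith [hK.σ_le_one_sub hi0n, hK.σ_zero_pos]))
    (ht.trans (by nlinarith [hK.σ_le_one_sub (by omega : ℓ < n), hK.σ_zero_pos]))

end IsMaxSplit

end Knots

theorem stmt10_general (k : ℕ) :
    ∃ Cb : ℝ, 1 ≤ Cb ∧
    ∀ n : ℕ, k + 1 ≤ n → ∀ K : PKnots k n, IsMaxSplit K →
    ∀ i0 : ℤ, 0 ≤ i0 → i0 < (n : ℤ) →
    ∃ c : ℝ, 1 / Cb ≤ c ∧ c ≤ Cb ∧
      ∀ j : ℤ, 0 ≤ j → j < (n : ℤ) - (k : ℤ) →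
        (if j ∈ Finset.Icc (i0 - (k : ℤ)) i0 then alphaNP K i0 j else 0) =
          c * (if j ∈ Finset.Icc (i0 - (k : ℤ)) i0 then alphaHat K i0 j else 0) := by
  have hM : (1 : ℝ) ≤ 2 * k + 1 := by linarith [k.cast_nonneg (α := ℝ)]
  have hMk : (1 : ℝ) ≤ (2 * k + 1) ^ k := one_le_pow₀ hM
  refine ⟨(2 * k + 1) ^ k * (2 * k + 1) ^ k, one_le_mul_of_one_le_of_one_le hMk hMk, ?_⟩
  intro n hn K hK i0 hi0 hi0n
  have hkn : k ≤ n := by omega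
  have hlower := Finset.prod_mem_Icc_inv_pow (s := Finset.Ico (i0 - k + 1) 0) (k := k) hM
    (fun ℓ hℓ => hK.lowerFactor_div_mem_Icc hkn hi0 hi0n hℓ) (by simp; omega)
  have hupper := Finset.prod_mem_Icc_inv_pow (s := Finset.Ico (n - k : ℤ) i0) (k := k) hM
    (fun ℓ hℓ => hK.upperFactor_div_mem_Icc hkn hi0n hℓ) (by simp; omega)
  obtain ⟨hlo, hhi⟩ := mul_mem_Icc_inv_mul (by positivity) (by positivity) hlower hupper
  refine ⟨_, (one_div _).trans_le hlo, hhi, fun j hj hjn => ?_⟩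
  split_ifs
  · rw [alphaNP_eq_dualCoeff, alphaHat_eq_dualCoeff]
    refine dualCoeff_eq_mul_dualCoeff (fun ℓ h0 hn => tauOf_of_mem K h0 hn) hi0 hi0n hj
      (by omega) (fun ℓ hℓ => ?_) (fun ℓ hℓ => ?_)
    · rw [Finset.mem_Ico] at hℓ
      exact (K.lowerFactor_pos ((hK.σ_neg hℓ.2).trans (hK.σ_pos hi0))).ne'
    · rw [Finset.mem_Ico] at hℓ
      exact (K.upperFactor_pos ((hK.σ_le_one_sub hi0n).trans_lt
        (by linarith [hK.one_lt_σ (by omega : (n : ℤ) ≤ ℓ + k), hK.σ_zero_pos]))).ne'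
  · rw [mul_zero]

/-- **Comparison of periodic and non-periodic dual B-spline coefficients.**  For the
maximal splitting, there is a constant `c ∼ 1` (i.e. `1/C_k ≤ c ≤ C_k` with `C_k`
depending only on `k`) such that `α_j = c ⋅ α̂_j` for all non-boundary indices `j`,
i.e. all `j` with `0 ≤ j < n - k`; here `α_j`, `α̂_j` are given by the explicit product
formulas for `i0-k ≤ j ≤ i0` and vanish otherwise. -/
theorem stmt10 (k : ℕ) (hk : 0 < k) :
    ∃ Cb : ℝ, 1 ≤ Cb ∧
    ∀ n : ℕ, k + 1 ≤ n → ∀ K : PKnots k n, IsMaxSplit K →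
    ∀ i0 : ℤ, 0 ≤ i0 → i0 < (n : ℤ) →
    ∃ c : ℝ, 1 / Cb ≤ c ∧ c ≤ Cb ∧
      ∀ j : ℤ, 0 ≤ j → j < (n : ℤ) - (k : ℤ) →
        (if j ∈ Finset.Icc (i0 - (k : ℤ)) i0 then alphaNP K i0 j else 0) =
          c * (if j ∈ Finset.Icc (i0 - (k : ℤ)) i0 then alphaHat K i0 j else 0) :=
  stmt10_general k
end

section
/- Let (Ĵ_{n_i})_{i=1}^∞ be a decreasing sequence of characteristic intervals, i.e. Ĵ_{n_{i+1}} ⊆ Ĵ_{n_i} for all i. Then there exist κ ∈ (0,1) and a constant C_k, both depending only on k, such that |Ĵ_{n_i}| ≤ C_k κ^i |Ĵ_{n_1}| for all i ∈ ℕ. -/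
open MeasureTheory Set
open scoped ENNReal NNReal

/-!
A characteristic interval `Ĵ_n` of length `L` lies within `k L` of the new knot
`s_{n-1} = σ_{i0}`, and the B-splines `N̂_{i0-k}`, `N̂_{i0}` have supports of length at least
`L / 2`, so fewer than `2k` of the points `s_0, …, s_{n-1}` lie (mod 1) within `L / 2` of
`s_{n-1}`. If the nested intervals `Ĵ_{n_i}` did not halve within `D` steps, the `D` new knots
would all lie in the `k`-neighbourhood of `Ĵ_{n_a}`, of length `(2k + 1) |Ĵ_{n_a}|`, and by
pigeonhole `2k` of them would lie within `|Ĵ_{n_a}| / 4 < L / 2` of the last of them. Halving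
every `D` steps is geometric decay with `κ = 1 - 1 / (2D)`.
-/

lemma exists_intShift_of_nested {a b : ℕ → ℝ} (hab : ∀ i, a i ≤ b i)
    (hnest : ∀ i, 1 ≤ i →
      ∃ r : ℤ, Set.Icc (a (i + 1) + r) (b (i + 1) + r) ⊆ Set.Icc (a i) (b i))
    {i j : ℕ} (hi : 1 ≤ i) (hij : i ≤ j) : ∃ R : ℤ, a i ≤ a j + R ∧ b j + R ≤ b i := by
  induction j, hij using Nat.le_induction with
  | base => exact ⟨0, by simp⟩
  | succ j hij ih =>
    obtain ⟨R, hR1, hR2⟩ := ih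
    obtain ⟨r, hr⟩ := hnest j (hi.trans hij)
    have hle : a (j + 1) + r ≤ b (j + 1) + r := by linarith [hab (j + 1)]
    obtain ⟨h1, -⟩ := hr (Set.left_mem_Icc.mpr hle)
    obtain ⟨-, h2⟩ := hr (Set.right_mem_Icc.mpr hle)
    exact ⟨R + r, by push_cast; linarith, by push_cast; linarith⟩

lemma Finset.exists_lt_card_filter_le_abs_sub_lt {ι : Type*} [LinearOrder ι] (x : ι → ℝ)
    {c δ : ℝ} (hδ : 0 < δ) {N m : ℕ} {S : Finset ι} (hS : (N + 1) * m < S.card)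
    (hx : ∀ j ∈ S, x j ∈ Set.Icc c (c + N * δ)) :
    ∃ j ∈ S, m < (S.filter (fun l => l ≤ j ∧ |x l - x j| < δ)).card := by
  classical
  have hcell : ∀ j ∈ S, ⌊(x j - c) / δ⌋ ∈ Finset.Icc (0 : ℤ) N := by
    intro j hj
    obtain ⟨h1, h2⟩ := hx j hj
    have h3 : (x j - c) / δ ≤ N := by rw [div_le_iff₀ hδ]; linarith
    rw [Finset.mem_Icc, Int.floor_nonneg, Int.floor_le_iff]
    exact ⟨div_nonneg (by linarith) hδ.le, by push_cast; linarith⟩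
  obtain ⟨t, -, ht⟩ := Finset.exists_lt_card_fiber_of_mul_lt_card_of_maps_to hcell
    (by simpa [Int.card_Icc] using hS)
  set F := S.filter (fun l => ⌊(x l - c) / δ⌋ = t)
  have hF : F.Nonempty := Finset.card_pos.mp (by omega)
  obtain ⟨hjS, hjt⟩ := Finset.mem_filter.mp (F.max'_mem hF)
  refine ⟨F.max' hF, hjS, ht.trans_le (Finset.card_le_card fun l hl => ?_)⟩
  obtain ⟨hlS, hlt⟩ := Finset.mem_filter.mp hl
  refine Finset.mem_filter.mpr ⟨hlS, F.le_max' l hl, ?_⟩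
  have := Int.abs_sub_lt_one_of_floor_eq_floor (hlt.trans hjt.symm)
  rwa [← sub_div, sub_sub_sub_cancel_right, abs_div, abs_of_pos hδ, div_lt_one hδ] at this

lemma le_two_mul_pow_of_halving {L : ℕ → ℝ} {D : ℕ} {κ : ℝ} (hD : 0 < D) (hκ0 : 0 ≤ κ)
    (hκ1 : κ ≤ 1) (hκD : 1 ≤ 2 * κ ^ D) (hL1 : 0 ≤ L 1) (hle : ∀ i, 1 ≤ i → L i ≤ L 1)
    (hhalf : ∀ a, 1 ≤ a → L (a + D) ≤ L a / 2) : ∀ i, 1 ≤ i → L i ≤ 2 * κ ^ i * L 1 := by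
  intro i
  induction i using Nat.strong_induction_on with
  | _ i ih =>
    intro hi
    rcases le_or_gt i D with hiD | hDi
    · calc L i ≤ 1 * L 1 := by rw [one_mul]; exact hle i hi
        _ ≤ 2 * κ ^ D * L 1 := by gcongr
        _ ≤ 2 * κ ^ i * L 1 := mul_le_mul_of_nonneg_right
          (mul_le_mul_of_nonneg_left (pow_le_pow_of_le_one hκ0 hκ1 hiD) two_pos.le) hL1
    · obtain ⟨a, rfl⟩ : ∃ a, i = a + D := ⟨i - D, by omega⟩
      have ha : 1 ≤ a := by omega
      have hpow : 0 ≤ κ ^ a * L 1 := by positivity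
      calc L (a + D) ≤ L a / 2 := hhalf a ha
        _ ≤ 2 * κ ^ a * L 1 / 2 := by gcongr; exact ih a (by omega) ha
        _ = 1 * (κ ^ a * L 1) := by ring
        _ ≤ 2 * κ ^ D * (κ ^ a * L 1) := by gcongr
        _ = 2 * κ ^ (a + D) * L 1 := by ring

lemma one_le_two_mul_one_sub_pow (n : ℕ) : 1 ≤ 2 * (1 - 1 / (2 * n) : ℝ) ^ n := by
  have hle : 1 / (2 * n : ℝ) ≤ 2 := by
    rcases Nat.eq_zero_or_pos n with rfl | hn
    · simp
    · rw [div_le_iff₀ (by positivity)]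
      have : (1 : ℝ) ≤ n := Nat.one_le_cast.mpr hn
      linarith
  have hbern := one_add_mul_le_pow (a := -(1 / (2 * n) : ℝ)) (by linarith) n
  rw [← sub_eq_add_neg] at hbern
  rcases Nat.eq_zero_or_pos n with rfl | hn
  · simp
  · have : (n : ℝ) * (1 / (2 * n)) = 1 / 2 := by field_simp
    linarith

section Knots

variable {k n : ℕ}

lemma PKnots.period_pos (K : PKnots k n) : 0 < n := by
  rcases Nat.eq_zero_or_pos n with rfl | hn
  · have := K.per 0
    simp at this
  · exact hn

lemma PKnots.σ_add_mul (K : PKnots k n) (j r : ℤ) : K.σ (j + r * n) = K.σ j + r := by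
  induction r using Int.induction_on with
  | zero => simp
  | succ m ih =>
    rw [show j + ((m : ℤ) + 1) * n = j + m * n + n by ring, K.per, ih]
    push_cast
    ring
  | pred m ih =>
    have h := K.per (j + (-(m : ℤ) - 1) * n)
    rw [show j + (-(m : ℤ) - 1) * n + n = j + -(m : ℤ) * n by ring, ih] at h
    push_cast at h ⊢
    linarith

lemma Enumerates.card_filter_eq {s : ℕ → ℝ} {K : PKnots k n} (hE : Enumerates s n K) (x : ℝ) :
    ((Finset.Ico (0 : ℤ) n).filter (K.σ · = x)).card =
      ((Finset.range n).filter (s · = x)).card := by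
  rw [← Set.ncard_coe_finset, ← Set.ncard_coe_finset]
  convert hE x using 2 <;> ext <;> simp [and_assoc]

open scoped Classical in
/-- Points `s m` lying (mod 1) in `(c, d)` are matched, value by value, with knot indices `ℓ`
such that `σ ℓ ∈ (c, d)`. -/
lemma Enumerates.card_window_le {s : ℕ → ℝ} {K : PKnots k n} (hE : Enumerates s n K)
    (hs : ∀ m, s m ∈ Set.Ico (0 : ℝ) 1) {c d : ℝ} (T : Finset ℤ)
    (hT : ∀ ℓ, K.σ ℓ ∈ Set.Ioo c d → ℓ ∈ T) :
    ((Finset.range n).filter (fun m => ∃ r : ℤ, s m + r ∈ Set.Ioo c d)).card ≤ T.card := by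
  set S := (Finset.range n).filter (fun m => ∃ r : ℤ, s m + r ∈ Set.Ioo c d)
  have hfiber : ∀ x ∈ S.image s,
      (S.filter (s · = x)).card ≤ (T.filter (fun ℓ => Int.fract (K.σ ℓ) = x)).card := by
    intro x hx
    obtain ⟨m, hmS, rfl⟩ := Finset.mem_image.mp hx
    obtain ⟨r, hr⟩ := (Finset.mem_filter.mp hmS).2
    calc (S.filter (s · = s m)).card ≤ ((Finset.range n).filter (s · = s m)).card :=
          Finset.card_le_card (Finset.filter_subset_filter _ (Finset.filter_subset _ _))
      _ = ((Finset.Ico (0 : ℤ) n).filter (K.σ · = s m)).card := (hE.card_filter_eq _).symm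
      _ ≤ _ := by
        refine Finset.card_le_card_of_injOn (· + r * n) (fun j hj => ?_)
          (fun a _ b _ h => by simpa using h)
        have hσ : K.σ (j + r * n) = s m + r := by rw [K.σ_add_mul, (Finset.mem_filter.mp hj).2]
        refine Finset.mem_filter.mpr ⟨hT _ (hσ ▸ hr), ?_⟩
        rw [hσ, Int.fract_add_intCast, Int.fract_eq_self.mpr (hs m)]
  calc S.card = ∑ x ∈ S.image s, (S.filter (s · = x)).card :=
        Finset.card_eq_sum_card_fiberwise fun m hm => Finset.mem_image_of_mem s hm
    _ ≤ ∑ x ∈ S.image s, (T.filter (fun ℓ => Int.fract (K.σ ℓ) = x)).card :=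
        Finset.sum_le_sum hfiber
    _ = (T.filter (fun ℓ => Int.fract (K.σ ℓ) ∈ S.image s)).card :=
        Finset.sum_card_fiberwise_eq_card_filter _ _ _
    _ ≤ T.card := Finset.card_filter_le _ _

end Knots

section CharInterval

variable {k n : ℕ} {K : PKnots k n} {i0 : ℤ} {A B : ℝ}

lemma IsCharInterval.exists_support (h : IsCharInterval K i0 A B) :
    ∃ j0 : ℤ, i0 - k ≤ j0 ∧ j0 ≤ i0 ∧ K.σ j0 ≤ A ∧ A ≤ B ∧ B ≤ K.σ (j0 + k) ∧
      K.ν j0 ≤ k * (B - A) ∧ K.ν j0 ≤ 2 * K.ν (i0 - k) ∧ K.ν j0 ≤ 2 * K.ν i0 := by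
  obtain ⟨j0, hj0, hcomp, -, l0, hl0, hmax, rfl, rfl⟩ := h
  obtain ⟨hj0a, hj0b⟩ := Finset.mem_Icc.mp hj0
  have hν : K.ν j0 = ∑ l ∈ Finset.range k, (K.σ (j0 + l + 1) - K.σ (j0 + l)) := by
    have h := Finset.sum_range_sub (fun l : ℕ => K.σ (j0 + l)) k
    simp only [Nat.cast_add, Nat.cast_one, Nat.cast_zero, add_zero, ← add_assoc] at h
    exact h.symm
  refine ⟨j0, hj0a, hj0b, K.mono (by omega), K.mono (by omega), K.mono (by omega), ?_,
    hcomp _ (Finset.mem_Icc.mpr ⟨le_rfl, by omega⟩),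
    hcomp _ (Finset.mem_Icc.mpr ⟨by omega, le_rfl⟩)⟩
  calc K.ν j0 ≤ ∑ _l ∈ Finset.range k, (K.σ (j0 + l0 + 1) - K.σ (j0 + l0)) :=
        hν ▸ Finset.sum_le_sum fun l hl => hmax l (Finset.mem_range.mp hl)
    _ = _ := by rw [Finset.sum_const, Finset.card_range, nsmul_eq_mul]

lemma IsCharInterval.left_lt_right (h : IsCharInterval K i0 A B) : A < B := by
  obtain ⟨j0, -, -, -, -, -, hν, -, -⟩ := h.exists_support
  have hνpos : 0 < K.ν j0 := sub_pos.mpr (K.sep j0)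
  by_contra! hle
  linarith [mul_nonpos_of_nonneg_of_nonpos (Nat.cast_nonneg (α := ℝ) k) (sub_nonpos.mpr hle)]

lemma IsCharInterval.knot_mem_Icc (h : IsCharInterval K i0 A B) :
    K.σ i0 ∈ Set.Icc (A - k * (B - A)) (B + k * (B - A)) := by
  obtain ⟨j0, hj0', hj0, hA, hAB, hB, hν, -, -⟩ := h.exists_support
  have h1 : K.σ j0 ≤ K.σ i0 := K.mono hj0
  have h2 : K.σ i0 ≤ K.σ (j0 + k) := K.mono (by omega)
  unfold PKnots.ν at hν
  constructor <;> linarith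

/-- The B-splines `N_{i0-k}` and `N_{i0}` have supports at least half as long as that of
`N_{j0}`, hence at least `|[A, B]| / 2`. -/
lemma IsCharInterval.mem_Ioo_of_σ_mem_Ioo (h : IsCharInterval K i0 A B) {ℓ : ℤ}
    (hℓ : K.σ ℓ ∈ Set.Ioo (K.σ i0 - (B - A) / 2) (K.σ i0 + (B - A) / 2)) :
    ℓ ∈ Finset.Ioo (i0 - k) (i0 + k) := by
  obtain ⟨j0, -, -, hA, -, hB, -, hν₁, hν₂⟩ := h.exists_support
  unfold PKnots.ν at hν₁ hν₂
  rw [sub_add_cancel] at hν₁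
  rw [Finset.mem_Ioo]
  constructor
  · by_contra! hc
    linarith [K.mono hc, hℓ.1]
  · by_contra! hc
    linarith [K.mono hc, hℓ.2]

end CharInterval

section CharIntervals

variable {k : ℕ} {s : ℕ → ℝ} {A B : ℕ → ℝ}

lemma HasCharIntervals.pos (hAB : HasCharIntervals k s A B) {n : ℕ} (hn : 2 * k ≤ n) : 0 < n :=
  (hAB n hn).choose.period_pos

lemma HasCharIntervals.left_lt_right (hAB : HasCharIntervals k s A B) {n : ℕ}
    (hn : 2 * k ≤ n) : A n < B n := by
  obtain ⟨K, -, i0, -, -, -, h⟩ := hAB n hn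
  exact h.left_lt_right

lemma HasCharIntervals.newKnot_mem_Icc (hAB : HasCharIntervals k s A B) {n : ℕ}
    (hn : 2 * k ≤ n) : s (n - 1) ∈ Set.Icc (A n - k * (B n - A n)) (B n + k * (B n - A n)) := by
  obtain ⟨K, -, i0, -, -, hi0, h⟩ := hAB n hn
  exact hi0 ▸ h.knot_mem_Icc

open scoped Classical in
lemma HasCharIntervals.card_window_le (hAB : HasCharIntervals k s A B)
    (hs : ∀ m, s m ∈ Set.Ico (0 : ℝ) 1) {n : ℕ} (hn : 2 * k ≤ n) :
    ((Finset.range n).filter (fun m => ∃ r : ℤ, s m + r ∈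
      Set.Ioo (s (n - 1) - (B n - A n) / 2) (s (n - 1) + (B n - A n) / 2))).card ≤ 2 * k - 1 := by
  obtain ⟨K, hE, i0, -, -, hi0, h⟩ := hAB n hn
  calc _ ≤ (Finset.Ioo (i0 - k) (i0 + k)).card :=
        hE.card_window_le hs _ fun ℓ hℓ => h.mem_Ioo_of_σ_mem_Ioo (hi0 ▸ hℓ)
    _ = 2 * k - 1 := by rw [Int.card_Ioo]; omega

variable {idx : ℕ → ℕ}

lemma HasCharIntervals.card_le_of_abs_sub_lt (hAB : HasCharIntervals k s A B)
    (hs : ∀ m, s m ∈ Set.Ico (0 : ℝ) 1) (hidx : StrictMono idx) (hidx2k : ∀ i, 2 * k ≤ idx i)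
    {x : ℕ → ℝ} (hx : ∀ l, ∃ r : ℤ, x l = s (idx l - 1) + r) {j : ℕ} {T : Finset ℕ}
    (hT : ∀ l ∈ T, l ≤ j ∧ |x l - x j| < (B (idx j) - A (idx j)) / 2) :
    T.card ≤ 2 * k - 1 := by
  classical
  choose R hR using hx
  refine (Finset.card_le_card_of_injOn (fun l => idx l - 1) (fun l hl => ?_) ?_).trans
    (hAB.card_window_le hs (hidx2k j))
  · obtain ⟨hlj, hclose⟩ := hT l hl
    have := hidx.monotone hlj
    have := hAB.pos (hidx2k l)
    refine Finset.mem_filter.mpr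
      ⟨Finset.mem_range.mpr (show idx l - 1 < idx j by omega), R l - R j, ?_⟩
    rw [hR l, hR j, abs_sub_lt_iff] at hclose
    push_cast
    constructor <;> linarith
  · intro l _ l' _ h
    have := hAB.pos (hidx2k l)
    have := hAB.pos (hidx2k l')
    exact hidx.injective (by simp only at h; omega)

/-- One more than the number of points that `8k + 5` cells hold with at most `2k - 1` in each. -/
def halvingSpan (k : ℕ) : ℕ := (8 * k + 5) * (2 * k - 1) + 1

lemma halvingSpan_pos (k : ℕ) : 0 < halvingSpan k := Nat.succ_pos _

lemma HasCharIntervals.length_le_half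
    (hAB : HasCharIntervals k s A B) (hs : ∀ m, s m ∈ Set.Ico (0 : ℝ) 1) (hidx : StrictMono idx)
    (hidx2k : ∀ i, 2 * k ≤ idx i)
    (hnest : ∀ i, 1 ≤ i → ∃ r : ℤ,
      Set.Icc (A (idx (i + 1)) + r) (B (idx (i + 1)) + r) ⊆ Set.Icc (A (idx i)) (B (idx i)))
    {a : ℕ} (ha : 1 ≤ a) :
    B (idx (a + halvingSpan k)) - A (idx (a + halvingSpan k)) ≤ (B (idx a) - A (idx a)) / 2 := by
  set D := halvingSpan k
  set L : ℕ → ℝ := fun j => B (idx j) - A (idx j) with hL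
  have hAB' : ∀ i, A (idx i) ≤ B (idx i) := fun i => (hAB.left_lt_right (hidx2k i)).le
  by_contra! hlong
  choose! R hR using fun j (h : a ≤ j) => exists_intShift_of_nested hAB' hnest ha h
  have hlen : ∀ j ∈ Finset.Ioc a (a + D), L a / 2 < L j ∧ L j ≤ L a := by
    intro j hj
    obtain ⟨haj, hjD⟩ := Finset.mem_Ioc.mp hj
    obtain ⟨R', hR'⟩ := exists_intShift_of_nested hAB' hnest (ha.trans haj.le) hjD
    have := hR j haj.le
    constructor <;> simp only [hL] at hlong ⊢ <;> linarith
  have hpos : 0 < L a := sub_pos.mpr (hAB.left_lt_right (hidx2k a))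
  obtain ⟨j, hj, hcard⟩ := Finset.exists_lt_card_filter_le_abs_sub_lt
    (fun l => s (idx l - 1) + R l) (c := A (idx a) - k * L a) (N := 8 * k + 4) (m := 2 * k - 1)
    (by positivity : 0 < L a / 4) (S := Finset.Ioc a (a + D)) (by simp [D, halvingSpan])
    fun l hl => by
      obtain ⟨hAl, hBl⟩ := hR l (Finset.mem_Ioc.mp hl).1.le
      obtain ⟨hlo, hhi⟩ := hAB.newKnot_mem_Icc (hidx2k l)
      have := mul_le_mul_of_nonneg_left (hlen l hl).2 (Nat.cast_nonneg (α := ℝ) k)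
      simp only [hL] at this ⊢
      push_cast
      constructor <;> linarith
  refine hcard.not_ge (hAB.card_le_of_abs_sub_lt hs hidx hidx2k (fun l => ⟨R l, rfl⟩)
    fun l hl => ⟨(Finset.mem_filter.mp hl).2.1, ?_⟩)
  linarith [(Finset.mem_filter.mp hl).2.2, (hlen j hj).1]

end CharIntervals

theorem stmt15_general (k : ℕ) :
    ∃ κ C : ℝ, 0 < κ ∧ κ < 1 ∧ 0 < C ∧
    ∀ s : ℕ → ℝ, IsAdmissible k s →
    ∀ A B : ℕ → ℝ, HasCharIntervals k s A B →
    ∀ idx : ℕ → ℕ, StrictMono idx → (∀ i, 2 * k ≤ idx i) →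
      (∀ i, 1 ≤ i →
        ∃ r : ℤ, Set.Icc (A (idx (i + 1)) + (r : ℝ)) (B (idx (i + 1)) + (r : ℝ)) ⊆
          Set.Icc (A (idx i)) (B (idx i))) →
      ∀ i : ℕ, 1 ≤ i →
        B (idx i) - A (idx i) ≤ C * κ ^ i * (B (idx 1) - A (idx 1)) := by
  have hD : (1 : ℝ) ≤ halvingSpan k := Nat.one_le_cast.mpr (halvingSpan_pos k)
  refine ⟨1 - 1 / (2 * halvingSpan k), 2, ?_, ?_, two_pos, ?_⟩
  · rw [sub_pos, div_lt_one (by positivity)]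
    linarith
  · exact sub_lt_self _ (by positivity)
  intro s hs A B hAB idx hidx hidx2k hnest i hi
  have hAB' : ∀ i, A (idx i) ≤ B (idx i) := fun i => (hAB.left_lt_right (hidx2k i)).le
  refine le_two_mul_pow_of_halving (L := fun i => B (idx i) - A (idx i)) (halvingSpan_pos k)
    (sub_nonneg.mpr ?_) (sub_le_self _ (by positivity)) (one_le_two_mul_one_sub_pow _)
    (sub_nonneg.mpr (hAB' 1)) (fun j hj => ?_)
    (fun a ha => hAB.length_le_half hs.1 hidx hidx2k hnest ha) i hi
  · rw [div_le_one (by positivity)]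
    linarith
  · obtain ⟨R, hR⟩ := exists_intShift_of_nested hAB' hnest le_rfl hj
    linarith

/-- **Geometric decay of nested characteristic intervals.**  If `(Ĵ_{n_i})_{i ≥ 1}` is a
decreasing sequence of characteristic intervals, then `|Ĵ_{n_i}| ≤ C_k κ^i |Ĵ_{n_1}|`
with `κ ∈ (0,1)` and `C_k` depending only on `k`. -/
theorem stmt15 (k : ℕ) (hk : 0 < k) :
    ∃ κ C : ℝ, 0 < κ ∧ κ < 1 ∧ 0 < C ∧
    ∀ s : ℕ → ℝ, IsAdmissible k s →
    ∀ A B : ℕ → ℝ, HasCharIntervals k s A B →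
    ∀ idx : ℕ → ℕ, StrictMono idx → (∀ i, 2 * k ≤ idx i) →
      (∀ i, 1 ≤ i →
        ∃ r : ℤ, Set.Icc (A (idx (i + 1)) + (r : ℝ)) (B (idx (i + 1)) + (r : ℝ)) ⊆
          Set.Icc (A (idx i)) (B (idx i))) →
      ∀ i : ℕ, 1 ≤ i →
        B (idx i) - A (idx i) ≤ C * κ ^ i * (B (idx 1) - A (idx 1)) :=
  stmt15_general k
end
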